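/- The map f(u₁,u₂) = (√3/3)(e^{iu₁}, e^{iu₂}, e^{i(u₂-u₁)}) takes values in S^5, and the vector field e₂ = (√2/√3)i((1/2)e^{iu₁}, e^{iu₂}, (1/2)e^{i(u₂-u₁)}) is a unit tangent vector to the image satisfying ⟨e₂, if⟩ = 2√2/3 at every point. Hence the generalized Clifford torus has constant contact angle β = arccos(2√2/3). -/

import Mathlib

open Complex

/-- The real inner product `⟨z,w⟩ = Re ∑ⱼ zʲ conj wʲ` on `ℂ³`. -/
noncomputable def rip3 (z w : ℂ × ℂ × ℂ) : ℝ :=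
  (z.1 * (starRingEnd ℂ) w.1 + z.2.1 * (starRingEnd ℂ) w.2.1 +
    z.2.2 * (starRingEnd ℂ) w.2.2).re

/-- Partial derivative in the first variable. -/
noncomputable def pd1 (F : ℝ × ℝ → ℂ × ℂ × ℂ) (u : ℝ × ℝ) : ℂ × ℂ × ℂ :=
  deriv (fun t => F (t, u.2)) u.1

/-- Partial derivative in the second variable. -/
noncomputable def pd2 (F : ℝ × ℝ → ℂ × ℂ × ℂ) (u : ℝ × ℝ) : ℂ × ℂ × ℂ :=
  deriv (fun t => F (u.1, t)) u.2

/-- The generalized Clifford torus `f(u₁,u₂) = (√3/3)(e^{iu₁}, e^{iu₂}, e^{i(u₂-u₁)})`. -/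
noncomputable def genCliffordTorus (u : ℝ × ℝ) : ℂ × ℂ × ℂ :=
  (Real.sqrt 3 / 3 : ℝ) •
    (Complex.exp (Complex.I * u.1), Complex.exp (Complex.I * u.2),
      Complex.exp (Complex.I * (u.2 - u.1)))

/-- `e₂ = (√2/√3) i ((1/2)e^{iu₁}, e^{iu₂}, (1/2)e^{i(u₂-u₁)})`. -/
noncomputable def genCliffordE2 (u : ℝ × ℝ) : ℂ × ℂ × ℂ :=
  ((Real.sqrt 2 / Real.sqrt 3 : ℝ) * Complex.I) •
    ((1 / 2) * Complex.exp (Complex.I * u.1), Complex.exp (Complex.I * u.2),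
      (1 / 2) * Complex.exp (Complex.I * (u.2 - u.1)))

/- ### Auxiliary lemmas -/

lemma gct_hd_exp (b c : ℂ) (a : ℝ) :
    HasDerivAt (fun t : ℝ => Complex.exp (I * (b + c * t)))
      (c * I * Complex.exp (I * (b + c * a))) a := by
  have h1 : HasDerivAt (fun z : ℂ => Complex.exp (I * (b + c * z)))
      (c * I * Complex.exp (I * (b + c * a))) (a : ℂ) := by
    have := (Complex.hasDerivAt_exp (I * (b + c * a))).comp (a : ℂ)
      ((((hasDerivAt_id (a : ℂ)).const_mul c).const_add b).const_mul I)
    simpa [Function.comp_def, mul_comm, mul_left_comm, mul_assoc] using this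
  simpa using h1.comp_ofReal

lemma gct_hd_exp1 (a : ℝ) :
    HasDerivAt (fun t : ℝ => Complex.exp (I * t)) (I * Complex.exp (I * a)) a := by
  simpa using gct_hd_exp 0 1 a

lemma gct_hd_exp3 (b : ℝ) (a : ℝ) :
    HasDerivAt (fun t : ℝ => Complex.exp (I * ((b : ℂ) - t)))
      (-(I * Complex.exp (I * ((b : ℂ) - a)))) a := by
  have := gct_hd_exp (b : ℂ) (-1) a
  have e : ∀ t : ℝ, ((b : ℂ) + (-1) * t) = ((b : ℂ) - t) := by intro t; ring
  simp only [e] at this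
  simpa using this

lemma gct_pd1_eq (u : ℝ × ℝ) :
    pd1 genCliffordTorus u = (Real.sqrt 3 / 3 : ℝ) •
      (I * Complex.exp (I * u.1), 0, -(I * Complex.exp (I * ((u.2 : ℂ) - u.1)))) := by
  have h2 : HasDerivAt (fun _ : ℝ => Complex.exp (I * u.2)) 0 u.1 := hasDerivAt_const _ _
  have h : HasDerivAt (fun t : ℝ => genCliffordTorus (t, u.2))
      ((Real.sqrt 3 / 3 : ℝ) •
        ((I * Complex.exp (I * u.1), (0 : ℂ),
          -(I * Complex.exp (I * ((u.2 : ℂ) - u.1)))) : ℂ × ℂ × ℂ)) u.1 := by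
    unfold genCliffordTorus
    exact (HasDerivAt.prodMk (gct_hd_exp1 u.1) (HasDerivAt.prodMk h2 (gct_hd_exp3 u.2 u.1))).const_smul
      (Real.sqrt 3 / 3 : ℝ)
  simpa [pd1] using h.deriv

lemma gct_pd2_eq (u : ℝ × ℝ) :
    pd2 genCliffordTorus u = (Real.sqrt 3 / 3 : ℝ) •
      (0, I * Complex.exp (I * u.2), I * Complex.exp (I * ((u.2 : ℂ) - u.1))) := by
  have h1 : HasDerivAt (fun _ : ℝ => Complex.exp (I * u.1)) 0 u.2 := hasDerivAt_const _ _
  have h3 : HasDerivAt (fun t : ℝ => Complex.exp (I * ((t : ℂ) - u.1)))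
      (I * Complex.exp (I * ((u.2 : ℂ) - u.1))) u.2 := by
    have := gct_hd_exp (-(u.1 : ℂ)) 1 u.2
    have e : ∀ t : ℝ, (-(u.1 : ℂ) + 1 * t) = ((t : ℂ) - u.1) := by intro t; ring
    simp only [e] at this
    simpa using this
  have h : HasDerivAt (fun t : ℝ => genCliffordTorus (u.1, t))
      ((Real.sqrt 3 / 3 : ℝ) •
        (((0 : ℂ), I * Complex.exp (I * u.2),
          I * Complex.exp (I * ((u.2 : ℂ) - u.1))) : ℂ × ℂ × ℂ)) u.2 := by
    unfold genCliffordTorus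
    exact (HasDerivAt.prodMk h1 (HasDerivAt.prodMk (gct_hd_exp1 u.2) h3)).const_smul (Real.sqrt 3 / 3 : ℝ)
  simpa [pd2] using h.deriv

lemma gct_e2_comb (u : ℝ × ℝ) :
    genCliffordE2 u = (Real.sqrt 2 / 2 : ℝ) • pd1 genCliffordTorus u +
      (Real.sqrt 2 : ℝ) • pd2 genCliffordTorus u := by
  have h3c : (Real.sqrt 3 : ℂ) * Real.sqrt 3 = 3 := by
    norm_cast; exact Real.mul_self_sqrt (by norm_num)
  have h3pc : (Real.sqrt 3 : ℂ) ≠ 0 := by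
    have : Real.sqrt 3 ≠ 0 := by positivity
    exact_mod_cast this
  rw [gct_pd1_eq, gct_pd2_eq]
  unfold genCliffordE2
  refine Prod.ext ?_ (Prod.ext ?_ ?_) <;>
    simp only [Prod.smul_mk, Prod.mk_add_mk, Prod.fst, Prod.snd, Complex.real_smul,
      smul_eq_mul, Prod.fst_add, Prod.snd_add] <;>
    push_cast <;>
    field_simp <;>
    ring_nf
  · linear_combination (-(I * Complex.exp (I * u.1))) * h3c
  · linear_combination (-2 * I * Complex.exp (I * u.2)) * h3c
  · linear_combination (-1 : ℂ) * h3c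

lemma gct_conj_exp_eq (z : ℂ) (hz : z.re = 0) :
    (starRingEnd ℂ) (Complex.exp z) = (Complex.exp z)⁻¹ := by
  rw [← Complex.exp_conj, ← Complex.exp_neg]
  congr 1
  apply Complex.ext <;> simp [hz]

lemma gct_part1 (u : ℝ × ℝ) : rip3 (genCliffordTorus u) (genCliffordTorus u) = 1 := by
  have h3 : Real.sqrt 3 * Real.sqrt 3 = 3 := Real.mul_self_sqrt (by norm_num)
  simp only [rip3, genCliffordTorus, Prod.smul_mk, Complex.real_smul, smul_eq_mul,
    map_mul, Complex.conj_ofReal]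
  rw [gct_conj_exp_eq _ (by simp), gct_conj_exp_eq _ (by simp), gct_conj_exp_eq _ (by simp)]
  have e : ∀ z : ℂ, z ≠ 0 → ∀ r : ℂ, r * z * (r * z⁻¹) = r * r := by
    intro z hz r; field_simp
  rw [e _ (Complex.exp_ne_zero _), e _ (Complex.exp_ne_zero _), e _ (Complex.exp_ne_zero _)]
  push_cast [← Complex.ofReal_mul, ← Complex.ofReal_add]
  norm_cast
  simp [Complex.mul_re]
  nlinarith [h3]

lemma gct_part2 (u : ℝ × ℝ) : rip3 (genCliffordE2 u) (genCliffordE2 u) = 1 := by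
  have h3 : Real.sqrt 3 * Real.sqrt 3 = 3 := Real.mul_self_sqrt (by norm_num)
  have h2 : Real.sqrt 2 * Real.sqrt 2 = 2 := Real.mul_self_sqrt (by norm_num)
  have h3p : Real.sqrt 3 ≠ 0 := by positivity
  simp only [rip3, genCliffordE2, Prod.smul_mk, smul_eq_mul,
    map_mul, Complex.conj_ofReal, Complex.conj_I, map_div₀, map_one, map_ofNat]
  rw [gct_conj_exp_eq _ (by simp), gct_conj_exp_eq _ (by simp), gct_conj_exp_eq _ (by simp)]
  have key : ∀ z : ℂ, z ≠ 0 → ∀ r c : ℂ, (r * I * (c * z)) * (r * (-I) * (c * z⁻¹))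
      = r * r * c * c := by
    intro z hz r c; field_simp; linear_combination (-(r * r * c * c)) * Complex.I_sq
  rw [key _ (Complex.exp_ne_zero _), key _ (Complex.exp_ne_zero _)]
  have key2 : ∀ z : ℂ, z ≠ 0 → ∀ r : ℂ, (r * I * z) * (r * (-I) * z⁻¹) = r * r := by
    intro z hz r; field_simp; linear_combination (-(r * r)) * Complex.I_sq
  rw [key2 _ (Complex.exp_ne_zero _)]
  have hrR : (Real.sqrt 2 / Real.sqrt 3) * (Real.sqrt 2 / Real.sqrt 3) = 2 / 3 := by
    rw [div_mul_div_comm, h2, h3]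
  have hr : ((Real.sqrt 2 / Real.sqrt 3 : ℝ) : ℂ) * ((Real.sqrt 2 / Real.sqrt 3 : ℝ) : ℂ)
      = ((2 / 3 : ℝ) : ℂ) := by rw [← Complex.ofReal_mul, hrR]
  rw [hr]
  push_cast
  norm_num

lemma gct_part4 (u : ℝ × ℝ) :
    rip3 (genCliffordE2 u) (Complex.I • genCliffordTorus u) = 2 * Real.sqrt 2 / 3 := by
  have h3 : Real.sqrt 3 * Real.sqrt 3 = 3 := Real.mul_self_sqrt (by norm_num)
  have h3p : Real.sqrt 3 ≠ 0 := by positivity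
  simp only [rip3, genCliffordE2, genCliffordTorus, Prod.smul_mk, Complex.real_smul,
    smul_eq_mul, map_mul, Complex.conj_ofReal, Complex.conj_I, map_div₀, map_one, map_ofNat]
  rw [gct_conj_exp_eq _ (by simp), gct_conj_exp_eq _ (by simp), gct_conj_exp_eq _ (by simp)]
  have key : ∀ z : ℂ, z ≠ 0 → ∀ r c d : ℂ, (r * I * (c * z)) * (-I * (d * z⁻¹))
      = r * c * d := by
    intro z hz r c d; field_simp; linear_combination (-(r * c * d)) * Complex.I_sq
  have key2 : ∀ z : ℂ, z ≠ 0 → ∀ r d : ℂ, (r * I * z) * (-I * (d * z⁻¹)) = r * d := by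
    intro z hz r d; field_simp; linear_combination (-(r * d)) * Complex.I_sq
  rw [key _ (Complex.exp_ne_zero _), key2 _ (Complex.exp_ne_zero _),
    key _ (Complex.exp_ne_zero _)]
  rw [← Complex.ofReal_re (2 * Real.sqrt 2 / 3)]
  congr 1
  have h3c : (Real.sqrt 3 : ℂ) * Real.sqrt 3 = 3 := by norm_cast
  have h3pc : (Real.sqrt 3 : ℂ) ≠ 0 := by exact_mod_cast h3p
  push_cast
  field_simp
  ring_nf

lemma gct_part5 : 2 * Real.sqrt 2 / 3 = Real.cos (Real.arccos (2 * Real.sqrt 2 / 3)) := by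
  have h2 : Real.sqrt 2 * Real.sqrt 2 = 2 := Real.mul_self_sqrt (by norm_num)
  have hn : Real.sqrt 2 ≥ 0 := Real.sqrt_nonneg 2
  rw [Real.cos_arccos] <;> nlinarith

/-- The generalized Clifford torus maps into `S⁵`, `e₂` is a unit tangent vector of the
image, and `⟨e₂, i f⟩ = 2√2/3` at every point; hence the contact angle is the constant
`β = arccos (2√2/3)`. -/
theorem generalized_clifford_torus_contact_angle (u : ℝ × ℝ) :
    rip3 (genCliffordTorus u) (genCliffordTorus u) = 1 ∧
    rip3 (genCliffordE2 u) (genCliffordE2 u) = 1 ∧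
    genCliffordE2 u ∈
      Submodule.span ℝ {pd1 genCliffordTorus u, pd2 genCliffordTorus u} ∧
    rip3 (genCliffordE2 u) (Complex.I • genCliffordTorus u) = 2 * Real.sqrt 2 / 3 ∧
    rip3 (genCliffordE2 u) (Complex.I • genCliffordTorus u) =
      Real.cos (Real.arccos (2 * Real.sqrt 2 / 3)) := by
  refine ⟨gct_part1 u, gct_part2 u, ?_, gct_part4 u, (gct_part4 u).trans gct_part5⟩
  rw [gct_e2_comb]
  exact Submodule.add_mem _
    (Submodule.smul_mem _ _ (Submodule.subset_span (Set.mem_insert _ _)))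
    (Submodule.smul_mem _ _ (Submodule.subset_span (Set.mem_insert_of_mem _ rfl)))
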